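/- For every i ≥ 1 and every x ∈ S_i with x₂ ≥ 0, one has |x − B_i^+| = dist(x, {B_j^+, B_j^- : j ≥ 1}); moreover |x − B_i^+| < |x − B_j^+| and |x − B_i^+| < |x − B_j^-| for every j ≠ i. -/

import Mathlib

open MeasureTheory Metric

open Finset in
lemma dist_sq_pt (d : ℕ) (hd : 2 ≤ d) (x : EuclideanSpace ℝ (Fin d)) (a b : ℝ) :
    dist x (EuclideanSpace.single (⟨0, Nat.lt_of_lt_of_le (by decide) hd⟩ : Fin d) a +
      EuclideanSpace.single (⟨1, Nat.lt_of_lt_of_le (by decide) hd⟩ : Fin d) b) ^ 2 =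
    (x ⟨0, Nat.lt_of_lt_of_le (by decide) hd⟩ - a) ^ 2 + (x ⟨1, Nat.lt_of_lt_of_le (by decide) hd⟩ - b) ^ 2 +
      ∑ k ∈ Finset.univ \ {(⟨0, Nat.lt_of_lt_of_le (by decide) hd⟩ : Fin d), ⟨1, Nat.lt_of_lt_of_le (by decide) hd⟩}, (x k) ^ 2 := by
  set i0 : Fin d := ⟨0, Nat.lt_of_lt_of_le (by decide) hd⟩
  set i1 : Fin d := ⟨1, Nat.lt_of_lt_of_le (by decide) hd⟩
  have h01 : i0 ≠ i1 := by simp [i0, i1, Fin.ext_iff]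
  rw [EuclideanSpace.dist_eq, Real.sq_sqrt (by positivity)]
  have hy : ∀ k : Fin d, (EuclideanSpace.single i0 a + EuclideanSpace.single i1 b) k
      = if k = i0 then a else if k = i1 then b else 0 := by
    intro k
    simp only [PiLp.add_apply, EuclideanSpace.single_apply]
    by_cases h : k = i0 <;> by_cases h' : k = i1 <;> simp_all
  have key : ∀ k : Fin d, (dist (x k) ((EuclideanSpace.single i0 a + EuclideanSpace.single i1 b) k))^2
      = if k = i0 then (x i0 - a)^2 else if k = i1 then (x i1 - b)^2 else (x k)^2 := by
    intro k
    rw [hy, Real.dist_eq, sq_abs]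
    by_cases h : k = i0 <;> by_cases h' : k = i1 <;> (try subst h) <;> (try subst h') <;> simp_all
  rw [Finset.sum_congr rfl (fun k _ => key k)]
  rw [← Finset.sum_sdiff (Finset.subset_univ ({i0, i1} : Finset (Fin d)))]
  rw [Finset.sum_pair h01]
  have : ∀ k ∈ Finset.univ \ ({i0, i1} : Finset (Fin d)),
      (if k = i0 then (x i0 - a)^2 else if k = i1 then (x i1 - b)^2 else (x k)^2) = (x k)^2 := by
    intro k hk
    simp only [Finset.mem_sdiff, Finset.mem_insert, Finset.mem_singleton] at hk
    push_neg at hk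
    simp [hk.2.1, hk.2.2]
  rw [Finset.sum_congr rfl this]
  simp only [if_true, eq_self_iff_true, if_neg h01.symm]
  ring

lemma key_num (L R W a b c : ℝ) (hL : 0 < L) (hR : 0 < R) (hW : 0 < W)
    (hwr : 100 * R ≤ W)
    (ha : |a| ≤ W + L) (hb0 : 0 ≤ b) (hb : b ≤ R / 2)
    (hc : 100 * max L (max R W) ≤ |c|) :
    a ^ 2 + (b - W) ^ 2 < (a - c) ^ 2 := by
  set M := max L (max R W) with hM
  have hLM : L ≤ M := le_max_left _ _
  have hRM : R ≤ M := le_trans (le_max_left _ _) (le_max_right _ _)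
  have hWM : W ≤ M := le_trans (le_max_right _ _) (le_max_right _ _)
  have hM0 : 0 < M := lt_of_lt_of_le hL hLM
  have haM : |a| ≤ 2 * M := by linarith
  have h1 : 98 * M ≤ |a - c| := by
    have := abs_sub_abs_le_abs_sub c a
    rw [abs_sub_comm] at this
    linarith
  have h2 : (98 * M) ^ 2 ≤ (a - c) ^ 2 := by
    rw [← sq_abs (a - c)]
    exact pow_le_pow_left₀ (by positivity) h1 2
  have ha2 : a ^ 2 ≤ (2 * M) ^ 2 := by
    rw [← sq_abs a]; exact pow_le_pow_left₀ (abs_nonneg a) haM 2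
  have hbW : |b - W| ≤ M := by
    rw [abs_le]; constructor <;> nlinarith
  have hb2 : (b - W) ^ 2 ≤ M ^ 2 := by
    rw [← sq_abs (b - W)]; exact pow_le_pow_left₀ (abs_nonneg _) hbW 2
  nlinarith [sq_nonneg M]

/-- For every cell index `i` and every `x ∈ S_i` with `x₂ ≥ 0`, the point `B_i^+` is a
nearest point to `x` among all the points `B_j^±`, and it is strictly closer to `x` than
`B_j^+` and `B_j^-` for every `j ≠ i`. -/
theorem stmt11 (d : ℕ) (hd : 2 ≤ d)
    (ℓ r w u : ℕ → ℝ)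
    (hℓ : ∀ i, 0 < ℓ i) (hr : ∀ i, 0 < r i) (hw : ∀ i, 0 < w i)
    (hsep : ∀ i, 100 * max (ℓ i) (max (r i) (w i)) ≤ u (i + 1) - u i)
    (hsep' : ∀ i, 100 * max (ℓ (i + 1)) (max (r (i + 1)) (w (i + 1))) ≤ u (i + 1) - u i)
    (hwr : ∀ i, 100 * r i ≤ w i)
    (Q : ℝ → ℝ → Set (EuclideanSpace ℝ (Fin d)))
    (hQ : ∀ L R : ℝ, Q L R = {x : EuclideanSpace ℝ (Fin d) |
      0 < x ⟨0, by omega⟩ ∧ x ⟨0, by omega⟩ < L ∧ |x ⟨1, by omega⟩| < R / 2 ∧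
      ∀ j : Fin d, 2 ≤ (j : ℕ) → |x j| < 1 / 2})
    (Ap Am Bp Bm : ℕ → EuclideanSpace ℝ (Fin d))
    (hAp : ∀ i, Ap i = EuclideanSpace.single (⟨0, by omega⟩ : Fin d) (u i + w i))
    (hAm : ∀ i, Am i = EuclideanSpace.single (⟨0, by omega⟩ : Fin d) (u i - w i))
    (hBp : ∀ i, Bp i = EuclideanSpace.single (⟨0, by omega⟩ : Fin d) (u i) +
      EuclideanSpace.single (⟨1, by omega⟩ : Fin d) (w i))
    (hBm : ∀ i, Bm i = EuclideanSpace.single (⟨0, by omega⟩ : Fin d) (u i) -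
      EuclideanSpace.single (⟨1, by omega⟩ : Fin d) (w i))
    (S : ℕ → Set (EuclideanSpace ℝ (Fin d)))
    (hS : ∀ i, S i =
      (fun q => Ap i + q) '' Q (ℓ i) (r i) ∪ (fun q => Am i - q) '' Q (ℓ i) (r i))
    (i : ℕ) (x : EuclideanSpace ℝ (Fin d)) (hx : x ∈ S i)
    (hx2 : 0 ≤ x ⟨1, by omega⟩) :
    dist x (Bp i) =
      infDist x {y : EuclideanSpace ℝ (Fin d) | ∃ j, y = Bp j ∨ y = Bm j} ∧
    ∀ j, j ≠ i → dist x (Bp i) < dist x (Bp j) ∧ dist x (Bp i) < dist x (Bm j) := by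
  set i0 : Fin d := ⟨0, by omega⟩ with hi0
  set i1 : Fin d := ⟨1, by omega⟩ with hi1
  have h01 : i0 ≠ i1 := by simp [i0, i1, Fin.ext_iff]
  -- rewrite Bm as a sum of singles
  have hBm' : ∀ j, Bm j = EuclideanSpace.single i0 (u j) + EuclideanSpace.single i1 (-(w j)) := by
    intro j
    rw [hBm j, sub_eq_add_neg]
    congr 1
    ext k
    simp only [PiLp.neg_apply, EuclideanSpace.single_apply]
    split_ifs <;> simp
  -- distance formulas
  set C := ∑ k ∈ Finset.univ \ ({i0, i1} : Finset (Fin d)), (x k) ^ 2 with hC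
  have dBp : ∀ j, dist x (Bp j) ^ 2 = (x i0 - u j) ^ 2 + (x i1 - w j) ^ 2 + C := by
    intro j; rw [hBp j]; exact dist_sq_pt d hd x (u j) (w j)
  have dBm : ∀ j, dist x (Bm j) ^ 2 = (x i0 - u j) ^ 2 + (x i1 + w j) ^ 2 + C := by
    intro j; rw [hBm' j]
    have := dist_sq_pt d hd x (u j) (-(w j))
    rw [this]; ring
  -- coordinates of x
  have hcoord : |x i0 - u i| ≤ w i + ℓ i ∧ |x i1| ≤ r i / 2 := by
    rw [hS i] at hx
    rcases hx with ⟨q, hq, rfl⟩ | ⟨q, hq, rfl⟩ <;>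
      rw [hQ] at hq <;> obtain ⟨h1, h2, h3, -⟩ := hq
    · have e0 : (Ap i + q) i0 = (u i + w i) + q i0 := by
        simp [hAp, EuclideanSpace.single_apply, PiLp.add_apply]
      have e1 : (Ap i + q) i1 = q i1 := by
        simp [hAp, EuclideanSpace.single_apply, PiLp.add_apply, h01.symm]
      simp only [e0, e1]
      refine ⟨?_, le_of_lt h3⟩
      rw [abs_le]; constructor <;> nlinarith [hw i, hℓ i]
    · have e0 : (Am i - q) i0 = (u i - w i) - q i0 := by
        simp [hAm, EuclideanSpace.single_apply, PiLp.sub_apply]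
      have e1 : (Am i - q) i1 = -(q i1) := by
        simp [hAm, EuclideanSpace.single_apply, PiLp.sub_apply, h01.symm]
      simp only [e0, e1, abs_neg]
      refine ⟨?_, le_of_lt h3⟩
      rw [abs_le]; constructor <;> nlinarith [hw i, hℓ i]
  -- monotonicity of u
  have humono : StrictMono u := by
    apply strictMono_nat_of_lt_succ
    intro n
    have h1 : 0 < max (ℓ n) (max (r n) (w n)) := lt_of_lt_of_le (hℓ n) (le_max_left _ _)
    have := hsep n
    linarith
  have hgap : ∀ j, j ≠ i → 100 * max (ℓ i) (max (r i) (w i)) ≤ |u j - u i| := by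
    intro j hj
    rcases lt_or_gt_of_ne hj with h | h
    · obtain ⟨m, rfl⟩ : ∃ m, i = m + 1 := ⟨i - 1, by omega⟩
      have h1 : u j ≤ u m := humono.monotone (by omega)
      have h2 := hsep' m
      have hpos : (0:ℝ) < max (ℓ (m+1)) (max (r (m+1)) (w (m+1))) :=
        lt_of_lt_of_le (hℓ _) (le_max_left _ _)
      rw [abs_sub_comm, abs_of_nonneg (by linarith)]
      linarith
    · have h1 : u (i + 1) ≤ u j := humono.monotone (by omega)
      have h2 := hsep i
      have hpos : (0:ℝ) < max (ℓ i) (max (r i) (w i)) :=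
        lt_of_lt_of_le (hℓ _) (le_max_left _ _)
      rw [abs_of_nonneg (by linarith)]
      linarith
  -- the strict inequality at the squared level
  have hsq : ∀ j, j ≠ i → dist x (Bp i) ^ 2 < (x i0 - u j) ^ 2 + C := by
    intro j hj
    rw [dBp i]
    have key := key_num (ℓ i) (r i) (w i) (x i0 - u i) (x i1) (u j - u i)
      (hℓ i) (hr i) (hw i) (hwr i) hcoord.1 hx2 (le_trans (le_abs_self _) hcoord.2) (hgap j hj)
    have : x i0 - u i - (u j - u i) = x i0 - u j := by ring
    rw [this] at key
    linarith
  have hlt : ∀ j, j ≠ i → dist x (Bp i) < dist x (Bp j) ∧ dist x (Bp i) < dist x (Bm j) := by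
    intro j hj
    have hp : dist x (Bp i) ^ 2 < dist x (Bp j) ^ 2 := by
      rw [dBp j]; have := hsq j hj; nlinarith [sq_nonneg (x i1 - w j)]
    have hm : dist x (Bp i) ^ 2 < dist x (Bm j) ^ 2 := by
      rw [dBm j]; have := hsq j hj; nlinarith [sq_nonneg (x i1 + w j)]
    exact ⟨lt_of_pow_lt_pow_left₀ 2 dist_nonneg hp, lt_of_pow_lt_pow_left₀ 2 dist_nonneg hm⟩
  refine ⟨?_, hlt⟩
  -- nearest point
  have hmem : Bp i ∈ {y : EuclideanSpace ℝ (Fin d) | ∃ j, y = Bp j ∨ y = Bm j} := ⟨i, Or.inl rfl⟩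
  have hle : ∀ y ∈ {y : EuclideanSpace ℝ (Fin d) | ∃ j, y = Bp j ∨ y = Bm j},
      dist x (Bp i) ≤ dist x y := by
    rintro y ⟨j, rfl | rfl⟩
    · rcases eq_or_ne j i with rfl | hj
      · exact le_refl _
      · exact le_of_lt (hlt j hj).1
    · rcases eq_or_ne j i with rfl | hj
      · have h2 : dist x (Bp j) ^ 2 ≤ dist x (Bm j) ^ 2 := by
          rw [dBp j, dBm j]; nlinarith [hx2, hw j]
        exact le_of_pow_le_pow_left₀ two_ne_zero dist_nonneg h2
      · exact le_of_lt (hlt j hj).2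
  apply le_antisymm
  · by_contra hcon
    push_neg at hcon
    rw [infDist_lt_iff ⟨Bp i, hmem⟩] at hcon
    obtain ⟨y, hy, hylt⟩ := hcon
    exact absurd (hle y hy) (not_le.mpr hylt)
  · exact infDist_le_dist_of_mem hmem
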